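/- Let E be a finite-dimensional real inner product space, c₀, C₀ > 0, and f : E → ℝ convex with c₀‖y‖ ≤ f(y) ≤ C₀(1 + ‖y‖) for all y. For λ > 0 let f_λ be the Moreau–Yosida approximation of f. Then: (i) for every λ > 0 and y ∈ E, f_λ(y) ≥ c₀‖y‖ − (C₀²/2)λ; and (ii) there exist C > 0 and q₁ > 1 such that for all q ∈ (1, q₁] and all y ∈ E, (1/C) ‖y‖^q − C ≤ ( f_{q−1}(y) )^q ≤ C (1 + ‖y‖^q). -/

import Mathlib

/-!
Testing `f` at `y' = y` gives `f_λ ≤ f ≤ C₀(1 + ‖y‖)`. For the lower bound, the triangle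
inequality gives `f y' + ‖y - y'‖²/(2λ) ≥ c₀‖y‖ - c₀ t + t²/(2λ)` with `t = ‖y - y'‖`, and
minimising over `t` yields `f_λ(y) ≥ c₀‖y‖ - c₀²λ/2`; on a nontrivial space the two growth
bounds force `c₀ ≤ C₀`. For `q ∈ (1, 2]`, the `q`-th powers of these linear bounds are controlled
uniformly in `q` through `(u + v)^q ≤ 2(u^q + v^q)` and `min 1 K² ≤ K^q ≤ max 1 K²`.
-/

/-- The Moreau–Yosida approximation `f_λ(y) = inf_{y'} ( f y' + ‖y - y'‖² / (2λ) )`. -/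
noncomputable def moreauYosida {E : Type*} [NormedAddCommGroup E] [InnerProductSpace ℝ E]
    (f : E → ℝ) (lam : ℝ) (y : E) : ℝ :=
  ⨅ y' : E, (f y' + ‖y - y'‖ ^ 2 / (2 * lam))

open Set

namespace Real

theorem rpow_add_le_two_mul_rpow_add_rpow {u v q : ℝ} (hu : 0 ≤ u) (hv : 0 ≤ v) (hq1 : 1 ≤ q)
    (hq2 : q ≤ 2) : (u + v) ^ q ≤ 2 * (u ^ q + v ^ q) := by
  lift u to NNReal using hu
  lift v to NNReal using hv
  have h : (u + v) ^ q ≤ (2 : NNReal) ^ (q - 1) * (u ^ q + v ^ q) :=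
    NNReal.rpow_add_le_mul_rpow_add_rpow u v hq1
  have h2 : (2 : ℝ) ^ (q - 1) ≤ 2 := by
    simpa using rpow_le_rpow_of_exponent_le one_le_two (by linarith : q - 1 ≤ 1)
  calc ((u : ℝ) + v) ^ q ≤ 2 ^ (q - 1) * (u ^ q + v ^ q) := by exact_mod_cast h
    _ ≤ 2 * (u ^ q + v ^ q) := by gcongr

theorem rpow_le_max_one_sq {K q : ℝ} (hK : 0 ≤ K) (hq0 : 0 ≤ q) (hq2 : q ≤ 2) :
    K ^ q ≤ max 1 K ^ 2 :=
  calc K ^ q ≤ max 1 K ^ q := by gcongr; exact le_max_right _ _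
    _ ≤ max 1 K ^ (2 : ℝ) := rpow_le_rpow_of_exponent_le (le_max_left _ _) hq2
    _ = max 1 K ^ 2 := rpow_two _

theorem min_one_sq_le_rpow {K q : ℝ} (hK : 0 < K) (hq0 : 0 ≤ q) (hq2 : q ≤ 2) :
    min 1 K ^ 2 ≤ K ^ q :=
  calc min 1 K ^ 2 = min 1 K ^ (2 : ℝ) := (rpow_two _).symm
    _ ≤ min 1 K ^ q := rpow_le_rpow_of_exponent_ge (lt_min one_pos hK) (min_le_left _ _) hq2
    _ ≤ K ^ q := by gcongr; exact min_le_right _ _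

end Real

theorem le_of_forall_mul_norm_le_mul_one_add_norm {E : Type*} [NormedAddCommGroup E]
    [NormedSpace ℝ E] [Nontrivial E] {c C : ℝ} (h : ∀ y : E, c * ‖y‖ ≤ C * (1 + ‖y‖)) :
    c ≤ C := by
  have hC : 0 ≤ C := by simpa using h 0
  by_contra! hlt
  obtain ⟨y, hy⟩ := exists_norm_eq E (div_pos (by linarith : 0 < C + 1) (sub_pos.2 hlt)).le
  have hbound := h y
  rw [hy] at hbound
  have hcancel : (c - C) * ((C + 1) / (c - C)) = C + 1 := mul_div_cancel₀ _ (sub_pos.2 hlt).ne'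
  nlinarith

section MoreauYosida

variable {E : Type*} [NormedAddCommGroup E] [InnerProductSpace ℝ E] {f : E → ℝ} {lam : ℝ}

theorem moreauYosida_nonneg (hf : ∀ y, 0 ≤ f y) (hlam : 0 ≤ lam) (y : E) :
    0 ≤ moreauYosida f lam y :=
  le_ciInf fun y' => add_nonneg (hf y') (by positivity)

theorem moreauYosida_le (hf : BddBelow (range f)) (hlam : 0 ≤ lam) (y : E) :
    moreauYosida f lam y ≤ f y := by
  obtain ⟨m, hm⟩ := hf
  have hbdd : BddBelow (range fun y' => f y' + ‖y - y'‖ ^ 2 / (2 * lam)) :=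
    ⟨m, by rintro _ ⟨y', rfl⟩; exact le_add_of_le_of_nonneg (hm ⟨y', rfl⟩) (by positivity)⟩
  simpa [moreauYosida] using ciInf_le hbdd y

theorem mul_norm_sub_le_moreauYosida {c : ℝ} (hc : 0 ≤ c) (hf : ∀ y, c * ‖y‖ ≤ f y)
    (hlam : 0 < lam) (y : E) : c * ‖y‖ - c ^ 2 / 2 * lam ≤ moreauYosida f lam y := by
  refine le_ciInf fun y' => ?_
  set t := ‖y - y'‖
  have htri : c * ‖y‖ ≤ c * ‖y'‖ + c * t := by
    rw [← mul_add]; gcongr; exact norm_le_norm_sub_add y y' |>.trans_eq (by rw [add_comm])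
  have hquad : c * t - c ^ 2 / 2 * lam ≤ t ^ 2 / (2 * lam) := by
    rw [le_div_iff₀ (by positivity)]; nlinarith [sq_nonneg (t - c * lam)]
  linarith [hf y']

theorem sub_le_moreauYosida_of_growth {c C : ℝ} (hc : 0 ≤ c) (hlow : ∀ y, c * ‖y‖ ≤ f y)
    (hup : ∀ y, f y ≤ C * (1 + ‖y‖)) (hlam : 0 < lam) (y : E) :
    c * ‖y‖ - C ^ 2 / 2 * lam ≤ moreauYosida f lam y := by
  rcases eq_or_ne y 0 with rfl | hy
  · have := moreauYosida_nonneg (fun y => (by positivity : 0 ≤ c * ‖y‖).trans (hlow y)) hlam.le 0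
    simp only [norm_zero, mul_zero, zero_sub]
    nlinarith
  · have : Nontrivial E := ⟨⟨y, 0, hy⟩⟩
    have hcC : c ≤ C := le_of_forall_mul_norm_le_mul_one_add_norm fun y => (hlow y).trans (hup y)
    calc c * ‖y‖ - C ^ 2 / 2 * lam ≤ c * ‖y‖ - c ^ 2 / 2 * lam := by gcongr
      _ ≤ moreauYosida f lam y := mul_norm_sub_le_moreauYosida hc hlow hlam y

end MoreauYosida

theorem le_rpow_of_mul_le_add {a b x g q : ℝ} (ha : 0 < a) (hb : 0 ≤ b) (hx : 0 ≤ x)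
    (hg : 0 ≤ g) (hq1 : 1 ≤ q) (hq2 : q ≤ 2) (h : a * x ≤ g + b) :
    min 1 a ^ 2 / 2 * x ^ q - max 1 b ^ 2 ≤ g ^ q := by
  have hq0 : 0 ≤ q := by linarith
  have hax : min 1 a ^ 2 * x ^ q ≤ 2 * (g ^ q + b ^ q) :=
    calc min 1 a ^ 2 * x ^ q ≤ a ^ q * x ^ q := by
          gcongr; exact Real.min_one_sq_le_rpow ha hq0 hq2
      _ = (a * x) ^ q := (Real.mul_rpow ha.le hx).symm
      _ ≤ (g + b) ^ q := by gcongr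
      _ ≤ 2 * (g ^ q + b ^ q) := Real.rpow_add_le_two_mul_rpow_add_rpow hg hb hq1 hq2
  linarith [Real.rpow_le_max_one_sq hb hq0 hq2]

theorem rpow_le_of_le_mul_one_add {A x g q : ℝ} (hA : 0 ≤ A) (hx : 0 ≤ x) (hg : 0 ≤ g)
    (hq1 : 1 ≤ q) (hq2 : q ≤ 2) (h : g ≤ A * (1 + x)) :
    g ^ q ≤ 2 * max 1 A ^ 2 * (1 + x ^ q) := by
  have hq0 : 0 ≤ q := by linarith
  calc g ^ q ≤ (A * (1 + x)) ^ q := by gcongr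
    _ = A ^ q * (1 + x) ^ q := Real.mul_rpow hA (by positivity)
    _ ≤ max 1 A ^ 2 * (2 * (1 ^ q + x ^ q)) := by
        gcongr
        · exact Real.rpow_le_max_one_sq hA hq0 hq2
        · exact Real.rpow_add_le_two_mul_rpow_add_rpow zero_le_one hx hq1 hq2
    _ = 2 * max 1 A ^ 2 * (1 + x ^ q) := by rw [Real.one_rpow]; ring

theorem moreauYosida_growth_bounds_general
    {E : Type*} [NormedAddCommGroup E] [InnerProductSpace ℝ E]
    (c₀ C₀ : ℝ) (hc₀ : 0 < c₀) (hC₀ : 0 < C₀) (f : E → ℝ)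
    (hlow : ∀ y, c₀ * ‖y‖ ≤ f y)
    (hup : ∀ y, f y ≤ C₀ * (1 + ‖y‖)) :
    (∀ lam : ℝ, 0 < lam → ∀ y : E,
      c₀ * ‖y‖ - C₀ ^ 2 / 2 * lam ≤ moreauYosida f lam y) ∧
    (∃ C : ℝ, 0 < C ∧ ∃ q₁ : ℝ, 1 < q₁ ∧ ∀ q : ℝ, 1 < q → q ≤ q₁ → ∀ y : E,
      (1 / C) * ‖y‖ ^ q - C ≤ (moreauYosida f (q - 1) y) ^ q ∧
      (moreauYosida f (q - 1) y) ^ q ≤ C * (1 + ‖y‖ ^ q)) := by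
  have hf0 : ∀ y, 0 ≤ f y := fun y => (by positivity : 0 ≤ c₀ * ‖y‖).trans (hlow y)
  have hlower := fun lam (hlam : 0 < lam) => sub_le_moreauYosida_of_growth hc₀.le hlow hup hlam
  refine ⟨hlower, ?_⟩
  set m := min 1 c₀ ^ 2 / 2
  have hm : 0 < m := by positivity
  set C := max (max (1 / m) (max 1 (C₀ ^ 2 / 2) ^ 2)) (2 * max 1 C₀ ^ 2)
  refine ⟨C, by positivity, 2, one_lt_two, fun q hq1 hq2 y => ?_⟩
  set g := moreauYosida f (q - 1) y
  have hg0 : 0 ≤ g := moreauYosida_nonneg hf0 (by linarith) y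
  have hglow : c₀ * ‖y‖ ≤ g + C₀ ^ 2 / 2 := by
    nlinarith [hlower (q - 1) (by linarith) y]
  have hgup : g ≤ C₀ * (1 + ‖y‖) :=
    (moreauYosida_le ⟨0, by rintro _ ⟨y', rfl⟩; exact hf0 y'⟩ (by linarith) y).trans (hup y)
  have hCm : 1 / C ≤ m := by
    rw [one_div_le (by positivity) hm]; exact le_max_of_le_left (le_max_left _ _)
  constructor
  · calc 1 / C * ‖y‖ ^ q - C ≤ m * ‖y‖ ^ q - max 1 (C₀ ^ 2 / 2) ^ 2 := by
          gcongr; exact le_max_of_le_left (le_max_right _ _)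
      _ ≤ g ^ q := le_rpow_of_mul_le_add hc₀ (by positivity) (norm_nonneg y) hg0 hq1.le hq2 hglow
  · calc g ^ q ≤ 2 * max 1 C₀ ^ 2 * (1 + ‖y‖ ^ q) :=
          rpow_le_of_le_mul_one_add hC₀.le (norm_nonneg y) hg0 hq1.le hq2 hgup
      _ ≤ C * (1 + ‖y‖ ^ q) := by gcongr; exact le_max_right _ _

/-- Growth bounds for the Moreau–Yosida regularizations (proof of Lemma 8.2(a),
equation "bound g"): (i) `f_λ(y) ≥ c₀‖y‖ - (C₀²/2)λ`; (ii) there are `C > 0` and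
`q₁ > 1` so that for `q ∈ (1, q₁]`, `(1/C)‖y‖^q - C ≤ (f_{q-1}(y))^q ≤ C(1 + ‖y‖^q)`. -/
theorem moreauYosida_growth_bounds
    {E : Type*} [NormedAddCommGroup E] [InnerProductSpace ℝ E] [FiniteDimensional ℝ E]
    (c₀ C₀ : ℝ) (hc₀ : 0 < c₀) (hC₀ : 0 < C₀) (f : E → ℝ)
    (hconv : ConvexOn ℝ Set.univ f)
    (hlow : ∀ y, c₀ * ‖y‖ ≤ f y)
    (hup : ∀ y, f y ≤ C₀ * (1 + ‖y‖)) :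
    (∀ lam : ℝ, 0 < lam → ∀ y : E,
      c₀ * ‖y‖ - C₀ ^ 2 / 2 * lam ≤ moreauYosida f lam y) ∧
    (∃ C : ℝ, 0 < C ∧ ∃ q₁ : ℝ, 1 < q₁ ∧ ∀ q : ℝ, 1 < q → q ≤ q₁ → ∀ y : E,
      (1 / C) * ‖y‖ ^ q - C ≤ (moreauYosida f (q - 1) y) ^ q ∧
      (moreauYosida f (q - 1) y) ^ q ≤ C * (1 + ‖y‖ ^ q)) :=
  moreauYosida_growth_bounds_general c₀ C₀ hc₀ hC₀ f hlow hup
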